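/- arXiv:2112.07292 — 3 statements merged into one kernel-verified Lean document; each statement's English description precedes it below -/
import Mathlib

section
/- Chain Rule for symbolic differentiation: let E ∈ Expr(I), F : I → Expr(J), ϑ : J → R an environment into a commutative semiring R, and j ∈ J. Then ⟦∂(⟦E⟧_F)/∂j⟧_ϑ = Σ_{i ∈ vars(E)} ⟦∂E/∂i⟧_{λi. ⟦F(i)⟧_ϑ} × ⟦∂F(i)/∂j⟧_ϑ, where the sum ranges over the finite set of variables occurring in E. -/
inductive Exp (I : Type) : Type
  | zero : Exp I
  | one  : Exp I
  | leaf : I → Exp I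
  | add  : Exp I → Exp I → Exp I
  | mul  : Exp I → Exp I → Exp I

def Exp.eval {I R : Type} [CommSemiring R] (ρ : I → R) : Exp I → R
  | .zero => 0
  | .one => 1
  | .leaf i => ρ i
  | .add e₁ e₂ => e₁.eval ρ + e₂.eval ρ
  | .mul e₁ e₂ => e₁.eval ρ * e₂.eval ρ

def Exp.deriv {I : Type} [DecidableEq I] (j : I) : Exp I → Exp I
  | .leaf i => if i = j then .one else .zero
  | .zero => .zero
  | .one => .zero
  | .add e₁ e₂ => .add (e₁.deriv j) (e₂.deriv j)
  | .mul e₁ e₂ => .add (.mul (e₁.deriv j) e₂) (.mul e₁ (e₂.deriv j))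

def Exp.vars {I : Type} [DecidableEq I] : Exp I → Finset I
  | .zero => ∅
  | .one => ∅
  | .leaf i => {i}
  | .add e₁ e₂ => e₁.vars ∪ e₂.vars
  | .mul e₁ e₂ => e₁.vars ∪ e₂.vars

/-- Evaluation of an expression in the free semiring `Exp J`:
substitution of `F i` for each leaf `i`. -/
def Exp.subst {I J : Type} (F : I → Exp J) : Exp I → Exp J
  | .zero => .zero
  | .one => .one
  | .leaf i => F i
  | .add e₁ e₂ => .add (e₁.subst F) (e₂.subst F)
  | .mul e₁ e₂ => .mul (e₁.subst F) (e₂.subst F)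

theorem Exp.eval_subst {I J R : Type} [CommSemiring R] (F : I → Exp J) (ϑ : J → R)
    (E : Exp I) : Exp.eval ϑ (Exp.subst F E) = Exp.eval (fun i => Exp.eval ϑ (F i)) E := by
  induction E with
  | zero => rfl
  | one => rfl
  | leaf i => rfl
  | add e₁ e₂ ih₁ ih₂ => simp [Exp.subst, Exp.eval, ih₁, ih₂]
  | mul e₁ e₂ ih₁ ih₂ => simp [Exp.subst, Exp.eval, ih₁, ih₂]

theorem Exp.eval_deriv_not_mem {I R : Type} [DecidableEq I] [CommSemiring R]
    (ρ : I → R) (i : I) (E : Exp I) (h : i ∉ Exp.vars E) :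
    Exp.eval ρ (Exp.deriv i E) = 0 := by
  induction E with
  | zero => rfl
  | one => rfl
  | leaf k =>
    simp [Exp.vars] at h
    simp [Exp.deriv, Ne.symm h, Exp.eval]
  | add e₁ e₂ ih₁ ih₂ =>
    simp [Exp.vars] at h
    simp [Exp.deriv, Exp.eval, ih₁ h.1, ih₂ h.2]
  | mul e₁ e₂ ih₁ ih₂ =>
    simp [Exp.vars] at h
    simp [Exp.deriv, Exp.eval, ih₁ h.1, ih₂ h.2]

/-- the Chain Rule for symbolic differentiation. -/
theorem chain_rule {I J R : Type} [DecidableEq I] [DecidableEq J] [CommSemiring R]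
    (E : Exp I) (F : I → Exp J) (ϑ : J → R) (j : J) :
    Exp.eval ϑ (Exp.deriv j (Exp.subst F E))
      = ∑ i ∈ Exp.vars E,
          Exp.eval (fun i => Exp.eval ϑ (F i)) (Exp.deriv i E)
            * Exp.eval ϑ (Exp.deriv j (F i)) := by
  induction E with
  | zero => simp [Exp.subst, Exp.deriv, Exp.eval, Exp.vars]
  | one => simp [Exp.subst, Exp.deriv, Exp.eval, Exp.vars]
  | leaf i => simp [Exp.subst, Exp.deriv, Exp.eval, Exp.vars]
  | add e₁ e₂ ih₁ ih₂ =>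
    have h₁ : ∑ i ∈ Exp.vars e₁, Exp.eval (fun i => Exp.eval ϑ (F i)) (Exp.deriv i e₁)
        * Exp.eval ϑ (Exp.deriv j (F i))
        = ∑ i ∈ Exp.vars e₁ ∪ Exp.vars e₂, Exp.eval (fun i => Exp.eval ϑ (F i)) (Exp.deriv i e₁)
        * Exp.eval ϑ (Exp.deriv j (F i)) := by
      apply Finset.sum_subset Finset.subset_union_left
      intro x _ hx
      simp [Exp.eval_deriv_not_mem _ _ _ hx]
    have h₂ : ∑ i ∈ Exp.vars e₂, Exp.eval (fun i => Exp.eval ϑ (F i)) (Exp.deriv i e₂)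
        * Exp.eval ϑ (Exp.deriv j (F i))
        = ∑ i ∈ Exp.vars e₁ ∪ Exp.vars e₂, Exp.eval (fun i => Exp.eval ϑ (F i)) (Exp.deriv i e₂)
        * Exp.eval ϑ (Exp.deriv j (F i)) := by
      apply Finset.sum_subset Finset.subset_union_right
      intro x _ hx
      simp [Exp.eval_deriv_not_mem _ _ _ hx]
    simp only [Exp.subst, Exp.deriv, Exp.eval, Exp.vars, ih₁, ih₂, h₁, h₂,
      ← Finset.sum_add_distrib, add_mul]
  | mul e₁ e₂ ih₁ ih₂ =>
    have h₁ : ∑ i ∈ Exp.vars e₁, Exp.eval (fun i => Exp.eval ϑ (F i)) (Exp.deriv i e₁)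
        * Exp.eval ϑ (Exp.deriv j (F i))
        = ∑ i ∈ Exp.vars e₁ ∪ Exp.vars e₂, Exp.eval (fun i => Exp.eval ϑ (F i)) (Exp.deriv i e₁)
        * Exp.eval ϑ (Exp.deriv j (F i)) := by
      apply Finset.sum_subset Finset.subset_union_left
      intro x _ hx
      simp [Exp.eval_deriv_not_mem _ _ _ hx]
    have h₂ : ∑ i ∈ Exp.vars e₂, Exp.eval (fun i => Exp.eval ϑ (F i)) (Exp.deriv i e₂)
        * Exp.eval ϑ (Exp.deriv j (F i))
        = ∑ i ∈ Exp.vars e₁ ∪ Exp.vars e₂, Exp.eval (fun i => Exp.eval ϑ (F i)) (Exp.deriv i e₂)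
        * Exp.eval ϑ (Exp.deriv j (F i)) := by
      apply Finset.sum_subset Finset.subset_union_right
      intro x _ hx
      simp [Exp.eval_deriv_not_mem _ _ _ hx]
    simp only [Exp.subst, Exp.deriv, Exp.eval, Exp.vars, Exp.eval_subst]
    rw [ih₁, ih₂, h₁, h₂, Finset.sum_mul, Finset.mul_sum, ← Finset.sum_add_distrib]
    apply Finset.sum_congr rfl
    intro x _
    ring
end

section
/- Correctness of forward-mode AD via dual numbers: let R be a commutative semiring. Define the dual-number semiring D(R) on pairs (a, ȧ) with (a,ȧ)+(b,ḃ) = (a+b, ȧ+ḃ), (a,ȧ)×(b,ḃ) = (a×b, ȧ×b + a×ḃ), zero (0,0), one (1,0). Then D(R) is a commutative semiring, and for every univariate expression E ∈ Expr({X}) and r ∈ R, evaluating E in D(R) at (r, 1) yields the pair (⟦E⟧_{X↦r}, ⟦E'⟧_{X↦r}), where E' = ∂E/∂X. -/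
/-- Addition of dual numbers. -/
def dAdd {R : Type} [CommSemiring R] (p q : R × R) : R × R := (p.1 + q.1, p.2 + q.2)

/-- Multiplication of dual numbers. -/
def dMul {R : Type} [CommSemiring R] (p q : R × R) : R × R :=
  (p.1 * q.1, p.2 * q.1 + p.1 * q.2)

/-- Evaluation of an expression in the dual-number semiring `D(R)`. -/
def dEval {I R : Type} [CommSemiring R] (ρ : I → R × R) : Exp I → R × R
  | .zero => ((0 : R), (0 : R))
  | .one => ((1 : R), (0 : R))
  | .leaf i => ρ i
  | .add e₁ e₂ => dAdd (dEval ρ e₁) (dEval ρ e₂)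
  | .mul e₁ e₂ => dMul (dEval ρ e₁) (dEval ρ e₂)

/-- `D(R)` is a commutative semiring and forward-mode AD via dual numbers
is correct: evaluating `E` at `(r, 1)` yields the value of `E` and of its derivative at `r`. -/
theorem dual_numbers_correct {R : Type} [CommSemiring R] :
    ((∀ p q r : R × R, dAdd (dAdd p q) r = dAdd p (dAdd q r)) ∧
     (∀ p q : R × R, dAdd p q = dAdd q p) ∧
     (∀ p : R × R, dAdd ((0 : R), (0 : R)) p = p) ∧
     (∀ p q r : R × R, dMul (dMul p q) r = dMul p (dMul q r)) ∧
     (∀ p q : R × R, dMul p q = dMul q p) ∧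
     (∀ p : R × R, dMul ((1 : R), (0 : R)) p = p) ∧
     (∀ p q r : R × R, dMul p (dAdd q r) = dAdd (dMul p q) (dMul p r)) ∧
     (∀ p q r : R × R, dMul (dAdd p q) r = dAdd (dMul p r) (dMul q r)) ∧
     (∀ p : R × R, dMul ((0 : R), (0 : R)) p = ((0 : R), (0 : R)))) ∧
    (∀ (E : Exp Unit) (r : R),
        dEval (fun _ => (r, (1 : R))) E
          = (Exp.eval (fun _ => r) E, Exp.eval (fun _ => r) (Exp.deriv () E))) := by
  constructor
  · refine ⟨?_, ?_, ?_, ?_, ?_, ?_, ?_, ?_, ?_⟩ <;>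
      intros <;> simp [dAdd, dMul, Prod.ext_iff] <;> ring_nf <;> simp [add_comm, mul_comm, mul_assoc, mul_left_comm, add_assoc, add_left_comm]
  · intro E r
    induction E with
    | zero => simp [dEval, Exp.eval, Exp.deriv]
    | one => simp [dEval, Exp.eval, Exp.deriv]
    | leaf i => simp [dEval, Exp.eval, Exp.deriv]
    | add a b ha hb => simp [dEval, Exp.eval, Exp.deriv, dAdd, ha, hb]
    | mul a b ha hb => simp [dEval, Exp.eval, Exp.deriv, dMul, ha, hb]
end

section
/- Well-formedness of context filling is preserved by extension: if every leaf of K[u] lies in S for all u ∈ S ∪ defs(K), and B = (u' := a op b) is a binding with a, b ∈ S ∪ defs(K) and u' fresh, then every leaf of (K;B)[w] lies in S for all w ∈ S ∪ defs(K;B). -/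
inductive Op : Type
  | add
  | mul

def Op.node {V : Type} : Op → Exp V → Exp V → Exp V
  | .add, e₁, e₂ => .add e₁ e₂
  | .mul, e₁, e₂ => .mul e₁ e₂

/-- A binding `u := a op b`. -/
structure Binding (V : Type) where
  u : V
  op : Op
  a : V
  b : V

/-- A context is a list of bindings; the left end is the earliest binding. -/
abbrev Ctx (V : Type) := List (Binding V)

def Ctx.defs {V : Type} (K : Ctx V) : List V := List.map Binding.u K

/-- Filling, processing bindings from the newest (head of the reversed list). -/
def fillAux {V : Type} [DecidableEq V] : List (Binding V) → V → Exp V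
  | [], y => .leaf y
  | B :: K, y =>
      if B.u = y then B.op.node (fillAux K B.a) (fillAux K B.b) else fillAux K y

/-- Filling a context with an identifier, processing bindings from the right end. -/
def Ctx.fill {V : Type} [DecidableEq V] (K : Ctx V) (y : V) : Exp V :=
  fillAux (List.reverse K) y

/-- Extension of an environment by a context: `ρ⟨K⟩(y) = ⟦K[y]⟧_ρ`. -/
def extendEnv {V R : Type} [DecidableEq V] [CommSemiring R] (ρ : V → R) (K : Ctx V) : V → R :=
  fun y => Exp.eval ρ (Ctx.fill K y)

/-- well-formedness of context filling is preserved when appending a binding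
whose operands are defined and whose name is fresh. -/
theorem fill_wellformed_snoc {V : Type} [DecidableEq V] (S : Set V) (K : Ctx V)
    (u' a b : V) (op : Op)
    (ha : a ∈ S ∨ a ∈ Ctx.defs K) (hb : b ∈ S ∨ b ∈ Ctx.defs K)
    (hu : ¬(u' ∈ S ∨ u' ∈ Ctx.defs K ∨ u' = a ∨ u' = b))
    (hK : ∀ w : V, (w ∈ S ∨ w ∈ Ctx.defs K) → ∀ i ∈ Exp.vars (Ctx.fill K w), i ∈ S) :
    ∀ w : V,
      (w ∈ S ∨ w ∈ Ctx.defs ((K ++ [⟨u', op, a, b⟩] : List (Binding V)) : Ctx V)) →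
      ∀ i ∈ Exp.vars (Ctx.fill ((K ++ [⟨u', op, a, b⟩] : List (Binding V)) : Ctx V) w),
        i ∈ S := by
  intro w hw i hi
  have hfill : Ctx.fill (K ++ [⟨u', op, a, b⟩]) w =
      if u' = w then op.node (Ctx.fill K a) (Ctx.fill K b) else Ctx.fill K w := by
    simp [Ctx.fill, List.reverse_append, fillAux]
  by_cases h : u' = w
  · rw [hfill, if_pos h] at hi
    cases op <;> simp [Op.node, Exp.vars] at hi <;>
      rcases hi with hi | hi <;>
      [exact hK a ha i hi; exact hK b hb i hi; exact hK a ha i hi; exact hK b hb i hi]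
  · rw [hfill, if_neg h] at hi
    rcases hw with hw | hw
    · exact hK w (Or.inl hw) i hi
    · simp [Ctx.defs] at hw
      rcases hw with hw | hw
      · exact hK w (Or.inr (by simpa [Ctx.defs] using hw)) i hi
      · exact absurd hw.symm h
end
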